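/- Let a, b : ℕ → ℝ be sequences of nonnegative reals, and for a real t ≥ 1 set A(t) = ∑_{m ≤ ⌊t⌋} a_m and B(t) = ∑_{m ≤ ⌊t⌋} b_m. Let g : ℝ → ℝ be monotone increasing and continuously differentiable with g'(t) ≥ 0 on [1, ∞), and with g(n) > 0 and B(n) > 0 for all sufficiently large n. Suppose: (i) A(n)/B(n) → 1 as n → ∞; (ii) the limit L = lim_{n→∞} (∫_1^n B(t)·g'(t) dt)/(B(n)·g(n)) exists, is finite and L ≠ 1; (iii) ∫_1^n B(t)·g'(t) dt → ∞ as n → ∞. Then (∑_{k=1}^n a_k·g(k))/(∑_{k=1}^n b_k·g(k)) → 1 as n → ∞. -/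

import Mathlib

/-!
Abel summation gives `∑_{k=1}^n c_k g(k) = g(n) C(n) - ∫_1^n C(t) g'(t) dt - g(1) c_0` for
`c = a, b`. Since `A ~ B`, `B g' ≥ 0` eventually and `∫_1^n B g' → ∞`, the two integrals are
asymptotically equivalent. Hypotheses (ii) and (iii) force `B(n) g(n) → ∞`; measured against
`B(n) g(n)`, the `b`-sum tends to `1 - L ≠ 0`, while the two sums differ by `o(B(n) g(n))`.
-/

open Filter

/-- The partial-sum step function `A(t) = ∑_{m ≤ ⌊t⌋} a m`. -/
noncomputable def partialSum (a : ℕ → ℝ) (t : ℝ) : ℝ :=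
  ∑ m ∈ Finset.range (⌊t⌋₊ + 1), a m

open Asymptotics MeasureTheory Topology

theorem Asymptotics.IsLittleO.intervalIntegral {ι E : Type*} [NormedAddCommGroup E]
    [NormedSpace ℝ E] {l : Filter ι} {f : ℝ → E} {g : ℝ → ℝ} {a : ℝ} {u : ι → ℝ}
    (hfg : f =o[atTop] g) (hg : ∀ᶠ t in atTop, 0 ≤ g t)
    (hf_int : ∀ x, a ≤ x → IntervalIntegrable f volume a x)
    (hg_int : ∀ x, a ≤ x → IntervalIntegrable g volume a x)
    (hu : Tendsto u l atTop) (hG : Tendsto (fun i => ∫ t in a..u i, g t) l atTop) :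
    (fun i => ∫ t in a..u i, f t) =o[l] fun i => ∫ t in a..u i, g t := by
  refine IsLittleO.of_bound fun ε hε => ?_
  -- Beyond `T'` we have `‖f‖ ≤ (ε / 2) g`; the integral up to `T'` is a constant, which the
  -- other `ε / 2` absorbs once `∫ g` is large.
  obtain ⟨T, hT⟩ := eventually_atTop.1 ((hfg.bound (half_pos hε)).and hg)
  set T' := max T a
  have haT : a ≤ T' := le_max_right T a
  filter_upwards [hu.eventually_ge_atTop T', hG.eventually_ge_atTop 0,
    (hG.const_mul_atTop (half_pos hε)).eventually_ge_atTop
      (‖∫ t in a..T', f t‖ - ε / 2 * ∫ t in a..T', g t)] with i hTu hG0 hGK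
  have hau : a ≤ u i := haT.trans hTu
  have hf_tail := (hf_int T' haT).symm.trans (hf_int (u i) hau)
  have hg_tail := (hg_int T' haT).symm.trans (hg_int (u i) hau)
  have htail : ‖∫ t in T'..u i, f t‖ ≤ ε / 2 * ∫ t in T'..u i, g t := by
    rw [← intervalIntegral.integral_const_mul]
    refine intervalIntegral.norm_integral_le_of_norm_le hTu
      (ae_of_all _ fun t ht => ?_) (hg_tail.const_mul _)
    obtain ⟨hft, hgt⟩ := hT t ((le_max_left T a).trans ht.1.le)
    rwa [Real.norm_of_nonneg hgt] at hft
  rw [← intervalIntegral.integral_interval_sub_left (hg_int (u i) hau) (hg_int T' haT)] at htail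
  rw [← intervalIntegral.integral_add_adjacent_intervals (hf_int T' haT) hf_tail,
    Real.norm_of_nonneg hG0]
  calc _ ≤ ‖∫ t in a..T', f t‖ + ‖∫ t in T'..u i, f t‖ := norm_add_le _ _
    _ ≤ ε * ∫ t in a..u i, g t := by linarith

theorem tendsto_atTop_of_tendsto_div {α : Type*} {l : Filter α} {u v : α → ℝ} {L : ℝ}
    (hu : Tendsto u l atTop) (huv : Tendsto (fun x => u x / v x) l (𝓝 L))
    (hv : ∀ᶠ x in l, 0 < v x) : Tendsto v l atTop := by
  have hM : 0 < |L| + 1 := by positivity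
  refine tendsto_atTop_mono' l ?_ (hu.atTop_div_const hM)
  filter_upwards [huv.eventually_lt_const (lt_of_le_of_lt (le_abs_self L) (lt_add_one _)), hv]
    with x hlt hvx
  rw [div_lt_iff₀ hvx] at hlt
  rw [div_le_iff₀ hM]
  linarith

theorem tendsto_div_of_isEquivalent {α : Type*} {l : Filter α} {G A B Ia Ib : α → ℝ}
    {ca cb L : ℝ} (hAB : A ~[l] B) (hI : Ia ~[l] Ib)
    (hL : Tendsto (fun x => Ib x / (B x * G x)) l (𝓝 L)) (hL1 : L ≠ 1)
    (hBG : Tendsto (fun x => B x * G x) l atTop) :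
    Tendsto (fun x => (G x * A x - Ia x - ca) / (G x * B x - Ib x - cb)) l (𝓝 1) := by
  have hBG0 : ∀ᶠ x in l, B x * G x ≠ 0 := (hBG.eventually_gt_atTop 0).mono fun _ h => h.ne'
  have hconst (c : ℝ) : (fun _ => c) =o[l] fun x => B x * G x :=
    isLittleO_const_left.2 (Or.inr (tendsto_norm_atTop_atTop.comp hBG))
  have hden : Tendsto (fun x => (G x * B x - Ib x - cb) / (B x * G x)) l (𝓝 (1 - L)) := by
    have h := ((tendsto_const_nhds (x := (1 : ℝ))).sub hL).sub
      (hconst cb).tendsto_div_nhds_zero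
    rw [sub_zero] at h
    refine h.congr' ?_
    filter_upwards [hBG0] with x hx
    rw [sub_div, sub_div, mul_comm (G x), div_self hx]
  have hL1' : 1 - L ≠ 0 := sub_ne_zero.2 hL1.symm
  have hden0 : ∀ᶠ x in l, G x * B x - Ib x - cb ≠ 0 :=
    (hden.eventually_ne hL1').mono fun _ h => left_ne_zero_of_mul h
  have hdiff : (fun x => (G x * A x - Ia x - ca) - (G x * B x - Ib x - cb)) =o[l]
      fun x => B x * G x := by
    have hGAB : (fun x => G x * (A x - B x)) =o[l] fun x => G x * B x :=
      (isBigO_refl G l).mul_isLittleO hAB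
    have hIb : Ib =O[l] fun x => B x * G x :=
      isBigO_of_div_tendsto_nhds (hBG0.mono fun _ h h' => absurd h' h) L hL
    refine ((hGAB.congr_right fun x => mul_comm _ _).sub
      (hI.isLittleO.trans_isBigO hIb)).sub (hconst (ca - cb)) |>.congr_left fun x => ?_
    simp only [Pi.sub_apply]
    ring
  refine (isEquivalent_iff_tendsto_one hden0).1 ?_
  exact hdiff.trans_isBigO (isBigO_of_div_tendsto_nhds_of_ne_zero hden hL1')

theorem partialSum_eq_sum_Icc (c : ℕ → ℝ) (t : ℝ) :
    partialSum c t = ∑ k ∈ Finset.Icc 0 ⌊t⌋₊, c k := by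
  rw [partialSum, Finset.range_eq_Ico, Finset.Ico_add_one_right_eq_Icc]

theorem partialSum_natFloor (c : ℕ → ℝ) (t : ℝ) :
    partialSum c ⌊t⌋₊ = partialSum c t := by
  rw [partialSum, partialSum, Nat.floor_natCast]

theorem monotone_partialSum {c : ℕ → ℝ} (hc : ∀ m, 0 ≤ c m) : Monotone (partialSum c) :=
  fun _ _ hst => Finset.sum_le_sum_of_subset_of_nonneg
    (Finset.range_subset_range.2 (Nat.succ_le_succ (Nat.floor_le_floor hst))) fun m _ _ => hc m

theorem partialSum_intervalIntegrable (c : ℕ → ℝ) (x y : ℝ) :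
    IntervalIntegrable (partialSum c) volume x y := by
  have hc : partialSum c =
      partialSum (fun m => max (c m) 0) - partialSum (fun m => max (-c m) 0) := by
    ext t
    simp only [partialSum, Pi.sub_apply, ← Finset.sum_sub_distrib,
      max_zero_sub_max_neg_zero_eq_self]
  rw [hc]
  exact (monotone_partialSum fun _ => le_max_right _ _).intervalIntegrable.sub
    (monotone_partialSum fun _ => le_max_right _ _).intervalIntegrable

theorem partialSum_mul_intervalIntegrable (c : ℕ → ℝ) {g' : ℝ → ℝ}
    (hg' : ContinuousOn g' (Set.Ici 1)) {x : ℝ} (hx : 1 ≤ x) :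
    IntervalIntegrable (fun t => partialSum c t * g' t) volume 1 x :=
  (partialSum_intervalIntegrable c 1 x).mul_continuousOn
    (hg'.mono (Set.uIcc_of_le hx ▸ Set.Icc_subset_Ici_self))

theorem sum_Icc_mul_eq_sub_integral (c : ℕ → ℝ) {g g' : ℝ → ℝ}
    (hderiv : ∀ t ∈ Set.Ici (1 : ℝ), HasDerivAt g (g' t) t)
    (hcont : ContinuousOn g' (Set.Ici 1)) {n : ℕ} (hn : 1 ≤ n) :
    ∑ k ∈ Finset.Icc 1 n, c k * g k =
      g n * partialSum c n - (∫ t in (1 : ℝ)..n, partialSum c t * g' t) - g 1 * c 0 := by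
  have hg'_eq : Set.EqOn (deriv g) g' (Set.Icc 1 n) := fun t ht => (hderiv t ht.1).deriv
  have habel := sum_mul_eq_sub_sub_integral_mul c zero_le_one (Nat.one_le_cast.2 hn)
    (fun t ht => (hderiv t ht.1).differentiableAt)
    ((hcont.mono Set.Icc_subset_Ici_self).integrableOn_Icc.congr_fun hg'_eq.symm
      measurableSet_Icc)
  have hint : ∫ t in Set.Ioc (1 : ℝ) n, deriv g t * ∑ k ∈ Finset.Icc 0 ⌊t⌋₊, c k =
      ∫ t in (1 : ℝ)..n, partialSum c t * g' t := by
    rw [intervalIntegral.integral_of_le (mod_cast hn)]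
    refine setIntegral_congr_fun measurableSet_Ioc fun t ht => ?_
    rw [hg'_eq (Set.Ioc_subset_Icc_self ht), partialSum_eq_sum_Icc, mul_comm]
  rw [Nat.floor_one, Nat.floor_natCast, hint] at habel
  rw [Finset.Icc_eq_cons_Ioc hn, Finset.sum_cons, partialSum_eq_sum_Icc, Nat.floor_natCast]
  simp only [mul_comm (c _), habel, Finset.sum_Icc_succ_top zero_le_one, Finset.Icc_self,
    Finset.sum_singleton, Nat.cast_one]
  ring

theorem isEquivalent_integral_partialSum_mul {a b : ℕ → ℝ} {g' : ℝ → ℝ}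
    (hcont : ContinuousOn g' (Set.Ici 1)) (hg' : ∀ t ∈ Set.Ici (1 : ℝ), 0 ≤ g' t)
    (hAB : (fun n : ℕ => partialSum a n) ~[atTop] fun n => partialSum b n)
    (hBpos : ∀ᶠ n : ℕ in atTop, 0 < partialSum b n)
    (hint : Tendsto (fun n : ℕ => ∫ t in (1 : ℝ)..n, partialSum b t * g' t) atTop atTop) :
    (fun n : ℕ => ∫ t in (1 : ℝ)..n, partialSum a t * g' t) ~[atTop]
      fun n => ∫ t in (1 : ℝ)..n, partialSum b t * g' t := by
  have hABt : partialSum a ~[atTop] partialSum b := by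
    simpa only [Function.comp_def, partialSum_natFloor] using
      hAB.comp_tendsto (tendsto_nat_floor_atTop (α := ℝ))
  have hdiff : (fun t => partialSum a t * g' t - partialSum b t * g' t) =o[atTop]
      fun t => partialSum b t * g' t := by
    simpa only [Pi.sub_apply, sub_mul] using hABt.isLittleO.mul_isBigO (isBigO_refl g' atTop)
  have hBg'_nonneg : ∀ᶠ t in atTop, 0 ≤ partialSum b t * g' t := by
    filter_upwards [(tendsto_nat_floor_atTop (α := ℝ)).eventually hBpos, eventually_ge_atTop 1]
      with t hBt ht
    rw [partialSum_natFloor] at hBt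
    exact mul_nonneg hBt.le (hg' t ht)
  refine (hdiff.intervalIntegral hBg'_nonneg
    (fun x hx => (partialSum_mul_intervalIntegrable a hcont hx).sub
      (partialSum_mul_intervalIntegrable b hcont hx))
    (fun x hx => partialSum_mul_intervalIntegrable b hcont hx)
    tendsto_natCast_atTop_atTop hint).congr' ?_ EventuallyEq.rfl
  filter_upwards [eventually_ge_atTop 1] with n hn
  exact intervalIntegral.integral_sub (partialSum_mul_intervalIntegrable a hcont (mod_cast hn))
    (partialSum_mul_intervalIntegrable b hcont (mod_cast hn))

theorem stmt15_general (a b : ℕ → ℝ) (g g' : ℝ → ℝ)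
    (hderiv : ∀ t ∈ Set.Ici (1 : ℝ), HasDerivAt g (g' t) t)
    (hcont : ContinuousOn g' (Set.Ici (1 : ℝ)))
    (hg' : ∀ t ∈ Set.Ici (1 : ℝ), 0 ≤ g' t)
    (hgpos : ∀ᶠ n : ℕ in atTop, 0 < g n)
    (hBpos : ∀ᶠ n : ℕ in atTop, 0 < partialSum b n)
    (hratio : Tendsto (fun n : ℕ => partialSum a n / partialSum b n)
      atTop (nhds 1))
    (L : ℝ) (hL : L ≠ 1)
    (hLlim : Tendsto (fun n : ℕ =>
        (∫ t in (1 : ℝ)..(n : ℝ), partialSum b t * g' t) /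
          (partialSum b n * g n)) atTop (nhds L))
    (hint : Tendsto (fun n : ℕ => ∫ t in (1 : ℝ)..(n : ℝ), partialSum b t * g' t)
      atTop atTop) :
    Tendsto (fun n : ℕ =>
        (∑ k ∈ Finset.Icc 1 n, a k * g k) / ∑ k ∈ Finset.Icc 1 n, b k * g k)
      atTop (nhds 1) := by
  have hAB : (fun n : ℕ => partialSum a n) ~[atTop] fun n => partialSum b n :=
    (isEquivalent_iff_tendsto_one (hBpos.mono fun _ h => h.ne')).2 hratio
  have hBG : Tendsto (fun n : ℕ => partialSum b n * g n) atTop atTop :=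
    tendsto_atTop_of_tendsto_div hint hLlim
      (hBpos.and hgpos |>.mono fun _ h => mul_pos h.1 h.2)
  refine (tendsto_div_of_isEquivalent (ca := g 1 * a 0) (cb := g 1 * b 0) hAB
    (isEquivalent_integral_partialSum_mul hcont hg' hAB hBpos hint) hLlim hL hBG).congr' ?_
  filter_upwards [eventually_ge_atTop 1] with n hn
  rw [sum_Icc_mul_eq_sub_integral a hderiv hcont hn,
    sum_Icc_mul_eq_sub_integral b hderiv hcont hn]

theorem stmt15 (a b : ℕ → ℝ) (ha : ∀ m, 0 ≤ a m) (hb : ∀ m, 0 ≤ b m)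
    (g g' : ℝ → ℝ) (hmono : Monotone g)
    (hderiv : ∀ t ∈ Set.Ici (1 : ℝ), HasDerivAt g (g' t) t)
    (hcont : ContinuousOn g' (Set.Ici (1 : ℝ)))
    (hg' : ∀ t ∈ Set.Ici (1 : ℝ), 0 ≤ g' t)
    (hgpos : ∀ᶠ n : ℕ in atTop, 0 < g n)
    (hBpos : ∀ᶠ n : ℕ in atTop, 0 < partialSum b n)
    (hratio : Tendsto (fun n : ℕ => partialSum a n / partialSum b n)
      atTop (nhds 1))
    (L : ℝ) (hL : L ≠ 1)
    (hLlim : Tendsto (fun n : ℕ =>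
        (∫ t in (1 : ℝ)..(n : ℝ), partialSum b t * g' t) /
          (partialSum b n * g n)) atTop (nhds L))
    (hint : Tendsto (fun n : ℕ => ∫ t in (1 : ℝ)..(n : ℝ), partialSum b t * g' t)
      atTop atTop) :
    Tendsto (fun n : ℕ =>
        (∑ k ∈ Finset.Icc 1 n, a k * g k) / ∑ k ∈ Finset.Icc 1 n, b k * g k)
      atTop (nhds 1) :=
  stmt15_general a b g g' hderiv hcont hg' hgpos hBpos hratio L hL hLlim hint
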